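/- arXiv:2112.13725 — 2 statements merged into one kernel-verified Lean document; each statement's English description precedes it below -/
import Mathlib

section
/- Let ε = 1/(32κ²√d) and ξ = 6. Conditioned on the events that for every 0 ≤ t ≤ n: max_{1≤i≤n} ‖W_i W^T Sᵗ‖_F ≤ (ξ/2)√d(√(nd)+√m+√(2γ n log n))², d_F(Sᵗ, S^{i,t}) ≤ ε√d for all 1 ≤ i ≤ n, and d_F(Sᵗ, Z) ≤ ε√(nd)/2, and conditioned on the contraction property that d_F(T(X),T(Y)) ≤ (1/2)d_F(X,Y) for all X, Y ∈ N_ε ∩ N_{ξ,∞} together with the Gaussian norm events ‖W‖ ≤ √(nd)+√m+√(2γ log n) and max_i ‖W_i‖ ≤ √d+√m+√(2γ log n), the GPM iterates satisfy Sᵗ ∈ N_ε ∩ N_{ξ,∞} for all t ≥ 0 and d_F(Sᵗ, S^{t−1}) ≤ (1/2)·d_F(S^{t−1}, S^{t−2}) ≤ 2^{−t+1}·d_F(S¹, S⁰) for all t ≥ 2. -/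
open MeasureTheory Matrix Filter

namespace GOPP

/-- Frobenius norm of a real matrix. -/
noncomputable def frob {α β : Type*} [Fintype α] [Fintype β] (X : Matrix α β ℝ) : ℝ :=
  Real.sqrt (∑ i, ∑ j, X i j ^ 2)

/-- Euclidean norm of a vector. -/
noncomputable def vnorm {β : Type*} [Fintype β] (v : β → ℝ) : ℝ :=
  Real.sqrt (∑ j, v j ^ 2)

/-- Operator (spectral) norm: the supremum of ‖Xu‖ over unit vectors u. -/
noncomputable def opNorm {α β : Type*} [Fintype α] [Fintype β] (X : Matrix α β ℝ) : ℝ :=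
  sSup {r : ℝ | ∃ u : β → ℝ, vnorm u = 1 ∧ r = vnorm (X.mulVec u)}

/-- Smallest singular value: the infimum of ‖uᵀX‖ over unit vectors u (for a d×m matrix
with d ≤ m this is the d-th largest singular value; for square matrices it is σ_min). -/
noncomputable def sigmaMin {α β : Type*} [Fintype α] [Fintype β] (X : Matrix α β ℝ) : ℝ :=
  sInf {r : ℝ | ∃ u : α → ℝ, vnorm u = 1 ∧ r = vnorm (Matrix.vecMul u X)}

/-- Condition number κ = σ_max/σ_min. -/
noncomputable def kappa {d m : ℕ} (A : Matrix (Fin d) (Fin m) ℝ) : ℝ :=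
  opNorm A / sigmaMin A

/-- Q is an orthogonal matrix. -/
def IsOrth {d : ℕ} (Q : Matrix (Fin d) (Fin d) ℝ) : Prop :=
  Qᵀ * Q = 1 ∧ Q * Qᵀ = 1

/-- Nuclear norm, via the dual characterization ‖M‖_* = max_{Q ∈ O(d)} ⟨Q, M⟩. -/
noncomputable def nuclearNorm {d : ℕ} (M : Matrix (Fin d) (Fin d) ℝ) : ℝ :=
  sSup {r : ℝ | ∃ Q : Matrix (Fin d) (Fin d) ℝ, IsOrth Q ∧ r = Matrix.trace (Qᵀ * M)}

/-- The i-th d×k block of an (nd)×k block matrix. -/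
def blk {n d k : ℕ} (S : Matrix (Fin n × Fin d) (Fin k) ℝ) (i : Fin n) :
    Matrix (Fin d) (Fin k) ℝ :=
  Matrix.of fun a b => S (i, a) b

/-- The i-th diagonal d×d block of an (nd)×(nd) matrix. -/
def dblk {n d : ℕ} (G : Matrix (Fin n × Fin d) (Fin n × Fin d) ℝ) (i : Fin n) :
    Matrix (Fin d) (Fin d) ℝ :=
  Matrix.of fun a b => G (i, a) (i, b)

/-- S ∈ O(d)^{⊗n}: each of the n d×d blocks of S is orthogonal. -/
def OrthBlocks {n d : ℕ} (S : Matrix (Fin n × Fin d) (Fin d) ℝ) : Prop :=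
  ∀ i, IsOrth (blk S i)

/-- Z ∈ ℝ^{nd×d}: the vertical stack of n copies of I_d. -/
def ZStack (n d : ℕ) : Matrix (Fin n × Fin d) (Fin d) ℝ :=
  Matrix.of fun p j => if p.2 = j then 1 else 0

/-- Vertical stack of n given d×k matrices. -/
def stack {n d k : ℕ} (B : Fin n → Matrix (Fin d) (Fin k) ℝ) :
    Matrix (Fin n × Fin d) (Fin k) ℝ :=
  Matrix.of fun p b => B p.1 p.2 b

/-- d_F(X,Y) = min_{Q ∈ O(d)} ‖X − YQ‖_F. -/
noncomputable def dF {n d : ℕ} (X Y : Matrix (Fin n × Fin d) (Fin d) ℝ) : ℝ :=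
  sInf {r : ℝ | ∃ Q, IsOrth Q ∧ r = frob (X - Y * Q)}

/-- R is a polar factor P(X) of X: an orthogonal global minimizer of ‖X − Q‖_F over O(d). -/
def IsPolar {d : ℕ} (X R : Matrix (Fin d) (Fin d) ℝ) : Prop :=
  IsOrth R ∧ ∀ Q : Matrix (Fin d) (Fin d) ℝ, IsOrth Q → frob (X - R) ≤ frob (X - Q)

/-- S = P_n(X): blockwise polar factor. -/
def IsPolarBlocks {n d : ℕ} (X S : Matrix (Fin n × Fin d) (Fin d) ℝ) : Prop :=
  ∀ i, IsPolar (blk X i) (blk S i)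

/-- U collects (an orthonormal basis of the span of) the top d left singular vectors of D:
U has orthonormal columns and maximizes the Ky Fan quantity trace(Uᵀ(DDᵀ)U). -/
def IsTopSingVecs {N : Type*} [Fintype N] {d m : ℕ} (D : Matrix N (Fin m) ℝ)
    (U : Matrix N (Fin d) ℝ) : Prop :=
  Uᵀ * U = 1 ∧ ∀ Q : Matrix N (Fin d) ℝ, Qᵀ * Q = 1 →
    Matrix.trace (Qᵀ * (D * Dᵀ) * Q) ≤ Matrix.trace (Uᵀ * (D * Dᵀ) * U)

/-- (U, S, V) is a top-d singular triple of D: orthonormal U, V, diagonal nonnegative S,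
DV = US, DᵀU = VS, and U spans a top-d left singular subspace. -/
def IsSVDTriple {N : Type*} [Fintype N] {d m : ℕ} (D : Matrix N (Fin m) ℝ)
    (U : Matrix N (Fin d) ℝ) (S : Matrix (Fin d) (Fin d) ℝ)
    (V : Matrix (Fin m) (Fin d) ℝ) : Prop :=
  Vᵀ * V = 1 ∧ (∀ a b, a ≠ b → S a b = 0) ∧ (∀ a, 0 ≤ S a a) ∧
    D * V = U * S ∧ Dᵀ * U = V * S ∧ IsTopSingVecs D U

/-- The generalized power method sequence with spectral initialization, run on the data
matrix D (so with C = DDᵀ): S⁰ = P_n(U) for top singular vectors U of D, and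
S^{t+1} = P_n(C Sᵗ). -/
def IsGPM {n d m : ℕ} (D : Matrix (Fin n × Fin d) (Fin m) ℝ)
    (S : ℕ → Matrix (Fin n × Fin d) (Fin d) ℝ) : Prop :=
  (∃ U, IsTopSingVecs D U ∧ IsPolarBlocks U (S 0)) ∧
    ∀ t, IsPolarBlocks (D * Dᵀ * S t) (S (t + 1))

/-- W^(i): W with its i-th block row replaced by 0. -/
def mask {n d m : ℕ} (W : Matrix (Fin n × Fin d) (Fin m) ℝ) (i : Fin n) :
    Matrix (Fin n × Fin d) (Fin m) ℝ :=
  Matrix.of fun p b => if p.1 = i then 0 else W p b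

/-- The noise matrix Δ = WAᵀZᵀ + ZAWᵀ + σWWᵀ. -/
noncomputable def delta {n d m : ℕ} (A : Matrix (Fin d) (Fin m) ℝ)
    (W : Matrix (Fin n × Fin d) (Fin m) ℝ) (σ : ℝ) :
    Matrix (Fin n × Fin d) (Fin n × Fin d) ℝ :=
  W * Aᵀ * (ZStack n d)ᵀ + ZStack n d * A * Wᵀ + σ • (W * Wᵀ)

/-- The i-th block column Δ_i = WAᵀ + ZAW_iᵀ + σWW_iᵀ of Δ. -/
noncomputable def deltaCol {n d m : ℕ} (A : Matrix (Fin d) (Fin m) ℝ)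
    (W : Matrix (Fin n × Fin d) (Fin m) ℝ) (σ : ℝ) (i : Fin n) :
    Matrix (Fin n × Fin d) (Fin d) ℝ :=
  W * Aᵀ + ZStack n d * A * (blk W i)ᵀ + σ • (W * (blk W i)ᵀ)

/-- The operator L S = C S/(n‖A‖²) with C = ZAAᵀZᵀ + σΔ. -/
noncomputable def Lop {n d m : ℕ} (A : Matrix (Fin d) (Fin m) ℝ)
    (W : Matrix (Fin n × Fin d) (Fin m) ℝ) (σ : ℝ)
    (S : Matrix (Fin n × Fin d) (Fin d) ℝ) : Matrix (Fin n × Fin d) (Fin d) ℝ :=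
  ((n : ℝ) * opNorm A ^ 2)⁻¹ •
    ((ZStack n d * A * Aᵀ * (ZStack n d)ᵀ + σ • delta A W σ) * S)

/-- √(nd) + √m + √(2γ n log n). -/
noncomputable def bnd1 (n d m : ℕ) (γ : ℝ) : ℝ :=
  Real.sqrt ((n : ℝ) * d) + Real.sqrt (m : ℝ) + Real.sqrt (2 * γ * n * Real.log n)

/-- √(nd) + √m + √(2γ log n). -/
noncomputable def bnd2 (n d m : ℕ) (γ : ℝ) : ℝ :=
  Real.sqrt ((n : ℝ) * d) + Real.sqrt (m : ℝ) + Real.sqrt (2 * γ * Real.log n)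

/-- The basin of attraction N_ε. -/
def memNeps {n d : ℕ} (ε : ℝ) (S : Matrix (Fin n × Fin d) (Fin d) ℝ) : Prop :=
  OrthBlocks S ∧ dF S (ZStack n d) ≤ ε * Real.sqrt ((n : ℝ) * d)

/-- The basin of attraction N_{ξ,∞}. -/
def memNxi {n d m : ℕ} (W : Matrix (Fin n × Fin d) (Fin m) ℝ) (γ ξ : ℝ)
    (S : Matrix (Fin n × Fin d) (Fin d) ℝ) : Prop :=
  OrthBlocks S ∧ ∀ i, frob (blk W i * Wᵀ * S) ≤ ξ * Real.sqrt (d : ℝ) * bnd1 n d m γ ^ 2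

/-- The distribution of a matrix with i.i.d. standard Gaussian N(0,1) entries. -/
noncomputable def stdGaussian (ι κ : Type*) [Fintype ι] [Fintype κ] :
    Measure (ι → κ → ℝ) :=
  Measure.pi fun _ : ι => Measure.pi fun _ : κ => ProbabilityTheory.gaussianReal 0 1

/-!
For `t ≤ n` the basin conditions hold with a factor-two margin by assumption. Beyond that one
inducts: as long as two consecutive iterates lie in `N_ε ∩ N_{ξ,∞}`, the contraction of `T`
halves the step length (the GPM step `P_n(C Sᵗ)` equals `T(Sᵗ)` because polar factors are
invariant under positive scaling). The steps therefore decay geometrically, so every later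
iterate stays within `2^{1-n} d_F(S¹, S⁰)` of `Sⁿ`. This distance is small enough to carry both
basin conditions over from `Sⁿ`: through the triangle inequality for `d_F`, and through
`‖W_i Wᵀ S‖_F ≤ ‖W_i Wᵀ S'‖_F + ‖W_i Wᵀ‖ d_F(S, S')`.
-/

section Norms

variable {α β ι : Type*} [Fintype α] [Fintype β] [Fintype ι]

lemma vnorm_eq_norm (v : β → ℝ) : vnorm v = ‖WithLp.toLp 2 v‖ := by
  simp [vnorm, EuclideanSpace.norm_eq]

lemma vnorm_eq_sqrt_dotProduct (v : β → ℝ) : vnorm v = √(v ⬝ᵥ v) := by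
  simp [vnorm, dotProduct, sq]

lemma frob_eq_norm_vec (X : Matrix α β ℝ) : frob X = ‖WithLp.toLp 2 X.vec‖ := by
  rw [frob, EuclideanSpace.norm_eq, Fintype.sum_prod_type, Finset.sum_comm]
  simp [Matrix.vec]

lemma frob_eq_sqrt_sum_vnorm_sq (X : Matrix α β ℝ) : frob X = √(∑ i, vnorm (X i) ^ 2) := by
  simp only [frob, vnorm, Real.sq_sqrt (Finset.sum_nonneg fun _ _ => sq_nonneg _)]

lemma frob_nonneg (X : Matrix α β ℝ) : 0 ≤ frob X := Real.sqrt_nonneg _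

@[simp] lemma frob_zero : frob (0 : Matrix α β ℝ) = 0 := by simp [frob]

lemma frob_add_le (X Y : Matrix α β ℝ) : frob (X + Y) ≤ frob X + frob Y := by
  simpa only [frob_eq_norm_vec, Matrix.vec_add, WithLp.toLp_add] using norm_add_le _ _

lemma frob_sub_comm (X Y : Matrix α β ℝ) : frob (X - Y) = frob (Y - X) := by
  simpa only [frob_eq_norm_vec, Matrix.vec_sub, WithLp.toLp_sub] using norm_sub_rev _ _

lemma frob_transpose (X : Matrix α β ℝ) : frob Xᵀ = frob X := by
  simp only [frob, Matrix.transpose_apply]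
  rw [Finset.sum_comm]

lemma frob_le_mul_frob_of_rows {X : Matrix α β ℝ} {Y : Matrix α ι ℝ} {c : ℝ}
    (hc : 0 ≤ c) (h : ∀ i, vnorm (X i) ≤ c * vnorm (Y i)) : frob X ≤ c * frob Y := by
  rw [frob_eq_sqrt_sum_vnorm_sq, frob_eq_sqrt_sum_vnorm_sq, ← Real.sqrt_sq hc,
    ← Real.sqrt_mul (sq_nonneg c), Finset.mul_sum]
  gcongr with i
  rw [← mul_pow]
  exact pow_le_pow_left₀ (Real.sqrt_nonneg _) (h i) 2

end Norms

section Orthogonal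

variable {α : Type*} [Fintype α] {d : ℕ}

lemma IsOrth.one : IsOrth (1 : Matrix (Fin d) (Fin d) ℝ) := by
  constructor <;> simp

lemma IsOrth.mul {P Q : Matrix (Fin d) (Fin d) ℝ} (hP : IsOrth P) (hQ : IsOrth Q) :
    IsOrth (P * Q) := by
  constructor
  · rw [Matrix.transpose_mul, Matrix.mul_assoc, ← Matrix.mul_assoc Pᵀ, hP.1,
      Matrix.one_mul, hQ.1]
  · rw [Matrix.transpose_mul, Matrix.mul_assoc, ← Matrix.mul_assoc Q, hQ.2,
      Matrix.one_mul, hP.2]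

lemma IsOrth.transpose {Q : Matrix (Fin d) (Fin d) ℝ} (hQ : IsOrth Q) : IsOrth Qᵀ := by
  simpa only [IsOrth, Matrix.transpose_transpose] using hQ.symm

lemma vnorm_vecMul_of_isOrth {Q : Matrix (Fin d) (Fin d) ℝ} (hQ : IsOrth Q) (v : Fin d → ℝ) :
    vnorm (v ᵥ* Q) = vnorm v := by
  have h : (v ᵥ* Q) ⬝ᵥ (v ᵥ* Q) = v ⬝ᵥ v := by
    rw [← Matrix.dotProduct_mulVec, ← Matrix.mulVec_transpose, Matrix.mulVec_mulVec, hQ.2,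
      Matrix.one_mulVec]
  rw [vnorm_eq_sqrt_dotProduct, vnorm_eq_sqrt_dotProduct, h]

lemma frob_mul_of_isOrth (M : Matrix α (Fin d) ℝ) {Q : Matrix (Fin d) (Fin d) ℝ}
    (hQ : IsOrth Q) : frob (M * Q) = frob M := by
  simp only [frob_eq_sqrt_sum_vnorm_sq]
  congr 1
  refine Finset.sum_congr rfl fun i _ => ?_
  rw [← vnorm_vecMul_of_isOrth hQ (M i)]
  rfl

end Orthogonal

section OperatorNorm

open scoped Matrix.Norms.L2Operator

variable {α β ι : Type*} [Fintype α] [Fintype β] [Fintype ι]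

lemma opNorm_eq_l2_opNorm [DecidableEq β] (X : Matrix α β ℝ) : opNorm X = ‖X‖ := by
  rw [Matrix.l2_opNorm_def, ← ContinuousLinearMap.sSup_sphere_eq_norm, opNorm]
  congr 1
  ext r
  simp only [Set.mem_ofPred_eq, Set.mem_image, mem_sphere_iff_norm, sub_zero, vnorm_eq_norm]
  constructor
  · rintro ⟨u, hu, rfl⟩
    exact ⟨WithLp.toLp 2 u, hu, rfl⟩
  · rintro ⟨x, hx, rfl⟩
    exact ⟨x.ofLp, hx, rfl⟩

lemma opNorm_nonneg (X : Matrix α β ℝ) : 0 ≤ opNorm X := by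
  classical
  exact opNorm_eq_l2_opNorm X ▸ norm_nonneg _

lemma vnorm_mulVec_le (X : Matrix α β ℝ) (u : β → ℝ) :
    vnorm (X *ᵥ u) ≤ opNorm X * vnorm u := by
  classical
  rw [opNorm_eq_l2_opNorm, vnorm_eq_norm, vnorm_eq_norm]
  exact Matrix.l2_opNorm_mulVec X (WithLp.toLp 2 u)

lemma opNorm_transpose (X : Matrix α β ℝ) : opNorm Xᵀ = opNorm X := by
  classical
  rw [opNorm_eq_l2_opNorm, opNorm_eq_l2_opNorm, ← Matrix.conjTranspose_eq_transpose_of_trivial,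
    Matrix.l2_opNorm_conjTranspose]

lemma opNorm_mul_le (X : Matrix α β ℝ) (Y : Matrix β ι ℝ) :
    opNorm (X * Y) ≤ opNorm X * opNorm Y := by
  classical
  simpa only [opNorm_eq_l2_opNorm] using Matrix.l2_opNorm_mul X Y

lemma frob_mul_le_opNorm_mul_frob (X : Matrix α β ℝ) (M : Matrix β ι ℝ) :
    frob (X * M) ≤ opNorm X * frob M := by
  rw [← frob_transpose (X * M), ← frob_transpose M, Matrix.transpose_mul]
  refine frob_le_mul_frob_of_rows (opNorm_nonneg X) fun j => ?_
  have hrow : (Mᵀ * Xᵀ) j = X *ᵥ Mᵀ j := by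
    ext k
    simp [Matrix.mul_apply, Matrix.mulVec, dotProduct, mul_comm]
  rw [hrow]
  exact vnorm_mulVec_le X _

lemma exists_vnorm_eq_one [Nonempty α] : ∃ u : α → ℝ, vnorm u = 1 := by
  classical
  obtain ⟨j⟩ := ‹Nonempty α›
  exact ⟨Pi.single j 1, by simp [vnorm_eq_norm]⟩

lemma sigmaMin_le_opNorm [Nonempty α] (X : Matrix α β ℝ) : sigmaMin X ≤ opNorm X := by
  obtain ⟨u, hu⟩ := exists_vnorm_eq_one (α := α)
  have hbdd : BddBelow {r : ℝ | ∃ u : α → ℝ, vnorm u = 1 ∧ r = vnorm (u ᵥ* X)} :=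
    ⟨0, fun r ⟨v, _, hr⟩ => hr ▸ Real.sqrt_nonneg _⟩
  calc sigmaMin X ≤ vnorm (u ᵥ* X) := csInf_le hbdd ⟨u, hu, rfl⟩
    _ = vnorm (Xᵀ *ᵥ u) := by rw [Matrix.mulVec_transpose]
    _ ≤ opNorm X := by simpa [hu, opNorm_transpose] using vnorm_mulVec_le Xᵀ u

lemma one_le_kappa {d m : ℕ} [NeZero d] {A : Matrix (Fin d) (Fin m) ℝ} (hA : 0 < sigmaMin A) :
    1 ≤ kappa A := by
  rw [kappa, one_le_div hA]
  exact sigmaMin_le_opNorm A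

end OperatorNorm

section Procrustes

variable {n d : ℕ} {X Y : Matrix (Fin n × Fin d) (Fin d) ℝ}

lemma dF_le_frob {Q : Matrix (Fin d) (Fin d) ℝ} (hQ : IsOrth Q) :
    dF X Y ≤ frob (X - Y * Q) := by
  refine csInf_le ⟨0, ?_⟩ ⟨Q, hQ, rfl⟩
  rintro _ ⟨_, _, rfl⟩
  exact frob_nonneg _

lemma le_dF {r : ℝ} (h : ∀ Q, IsOrth Q → r ≤ frob (X - Y * Q)) : r ≤ dF X Y := by
  unfold dF
  refine le_csInf ⟨_, 1, IsOrth.one, rfl⟩ ?_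
  rintro _ ⟨Q, hQ, rfl⟩
  exact h Q hQ

lemma dF_nonneg : 0 ≤ dF X Y :=
  le_dF fun _ _ => frob_nonneg _

lemma exists_frob_lt_dF_add {η : ℝ} (hη : 0 < η) :
    ∃ Q : Matrix (Fin d) (Fin d) ℝ, IsOrth Q ∧ frob (X - Y * Q) < dF X Y + η := by
  by_contra! h
  linarith [le_dF h]

lemma dF_le_dF_swap (X Y : Matrix (Fin n × Fin d) (Fin d) ℝ) : dF X Y ≤ dF Y X :=
  le_dF fun Q hQ => calc
    dF X Y ≤ frob (X - Y * Qᵀ) := dF_le_frob hQ.transpose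
    _ = frob ((Y - X * Q) * Qᵀ) := by
      rw [Matrix.sub_mul, Matrix.mul_assoc, hQ.2, Matrix.mul_one, frob_sub_comm]
    _ = frob (Y - X * Q) := frob_mul_of_isOrth _ hQ.transpose

lemma dF_comm (X Y : Matrix (Fin n × Fin d) (Fin d) ℝ) : dF X Y = dF Y X :=
  le_antisymm (dF_le_dF_swap X Y) (dF_le_dF_swap Y X)

lemma dF_triangle (X Y Z : Matrix (Fin n × Fin d) (Fin d) ℝ) : dF X Z ≤ dF X Y + dF Y Z := by
  refine le_of_forall_pos_le_add fun η hη => ?_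
  obtain ⟨Q₁, hQ₁, h₁⟩ := exists_frob_lt_dF_add (X := X) (Y := Y) (half_pos hη)
  obtain ⟨Q₂, hQ₂, h₂⟩ := exists_frob_lt_dF_add (X := Y) (Y := Z) (half_pos hη)
  calc dF X Z ≤ frob (X - Z * (Q₂ * Q₁)) := dF_le_frob (hQ₂.mul hQ₁)
    _ = frob ((X - Y * Q₁) + (Y - Z * Q₂) * Q₁) := by
        rw [Matrix.sub_mul, Matrix.mul_assoc]; abel_nf
    _ ≤ frob (X - Y * Q₁) + frob (Y - Z * Q₂) := by
        rw [← frob_mul_of_isOrth (Y - Z * Q₂) hQ₁]; exact frob_add_le _ _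
    _ ≤ dF X Y + dF Y Z + η := by linarith

end Procrustes

lemma frob_mul_le_add_opNorm_mul_dF {α : Type*} [Fintype α] {n d : ℕ}
    (M : Matrix α (Fin n × Fin d) ℝ) (X Y : Matrix (Fin n × Fin d) (Fin d) ℝ) :
    frob (M * X) ≤ frob (M * Y) + opNorm M * dF X Y := by
  have key : ∀ Q, IsOrth Q → frob (M * X) ≤ frob (M * Y) + opNorm M * frob (X - Y * Q) := by
    intro Q hQ
    calc frob (M * X) = frob (M * (X - Y * Q) + M * Y * Q) := by
          rw [Matrix.mul_sub, Matrix.mul_assoc, sub_add_cancel]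
      _ ≤ frob (M * (X - Y * Q)) + frob (M * Y) := by
          rw [← frob_mul_of_isOrth (M * Y) hQ]; exact frob_add_le _ _
      _ ≤ frob (M * Y) + opNorm M * frob (X - Y * Q) := by
          linarith [frob_mul_le_opNorm_mul_frob M (X - Y * Q)]
  rcases (opNorm_nonneg M).eq_or_lt with h0 | hpos
  · simpa [← h0] using key 1 IsOrth.one
  · have : (frob (M * X) - frob (M * Y)) / opNorm M ≤ dF X Y :=
      le_dF fun Q hQ => (div_le_iff₀' hpos).2 (by linarith [key Q hQ])
    linarith [(div_le_iff₀' hpos).1 this]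

lemma norm_smul_sub_le_of_norm_sub_le {E : Type*} [NormedAddCommGroup E] [InnerProductSpace ℝ E]
    {x r q : E} (hrq : ‖r‖ = ‖q‖) (h : ‖x - r‖ ≤ ‖x - q‖) {c : ℝ} (hc : 0 < c) :
    ‖c • x - r‖ ≤ ‖c • x - q‖ := by
  have key : ∀ y : E, ‖y - r‖ ≤ ‖y - q‖ ↔ inner ℝ y q ≤ inner ℝ y r := by
    intro y
    rw [← sq_le_sq₀ (norm_nonneg _) (norm_nonneg _), norm_sub_sq_real, norm_sub_sq_real, hrq]
    constructor <;> intro <;> linarith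
  rw [key] at h ⊢
  rw [real_inner_smul_left, real_inner_smul_left]
  exact mul_le_mul_of_nonneg_left h hc.le

section PolarFactor

variable {n d : ℕ}

lemma frob_of_isOrth {Q : Matrix (Fin d) (Fin d) ℝ} (hQ : IsOrth Q) : frob Q = √d := by
  rw [← Matrix.one_mul Q, frob_mul_of_isOrth _ hQ, frob]
  simp [Matrix.one_apply]

lemma IsPolar.smul {X R : Matrix (Fin d) (Fin d) ℝ} (h : IsPolar X R) {c : ℝ} (hc : 0 < c) :
    IsPolar (c • X) R := by
  refine ⟨h.1, fun Q hQ => ?_⟩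
  have hRQ : frob R = frob Q := by rw [frob_of_isOrth h.1, frob_of_isOrth hQ]
  have hXRQ := h.2 Q hQ
  simp only [frob_eq_norm_vec, Matrix.vec_sub, Matrix.vec_smul, WithLp.toLp_sub,
    WithLp.toLp_smul] at hRQ hXRQ ⊢
  exact norm_smul_sub_le_of_norm_sub_le hRQ hXRQ hc

lemma IsPolarBlocks.smul {X S : Matrix (Fin n × Fin d) (Fin d) ℝ} (h : IsPolarBlocks X S)
    {c : ℝ} (hc : 0 < c) : IsPolarBlocks (c • X) S :=
  fun i => (h i).smul hc

lemma orthBlocks_zStack : OrthBlocks (ZStack n d) := by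
  intro i
  have : blk (ZStack n d) i = 1 := by
    ext a b
    simp [blk, ZStack, Matrix.one_apply]
  rw [this]
  exact IsOrth.one

lemma dF_eq_zero_of_orthBlocks {X Y : Matrix (Fin 1 × Fin d) (Fin d) ℝ} (hX : OrthBlocks X)
    (hY : OrthBlocks Y) : dF X Y = 0 := by
  have hXYQ : X = Y * ((blk Y 0)ᵀ * blk X 0) := by
    ext ⟨i, a⟩ b
    obtain rfl : i = 0 := Subsingleton.elim i 0
    change blk X 0 a b = (blk Y 0 * ((blk Y 0)ᵀ * blk X 0)) a b
    rw [← Matrix.mul_assoc, (hY 0).2, Matrix.one_mul]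
  have h := dF_le_frob (X := X) (Y := Y) ((hY 0).transpose.mul (hX 0))
  rw [← hXYQ, sub_self, frob_zero] at h
  exact le_antisymm h dF_nonneg

end PolarFactor

section GeometricDecay

variable {E : Type*} {D : E → E → ℝ} {P : E → Prop} {s : ℕ → E} {n : ℕ}

lemma basin_invariant (hD : ∀ x y z, D x z ≤ D x y + D y z) (hδ : 0 ≤ D (s 1) (s 0))
    (hlow : ∀ t ≤ n, P (s t))
    (hfar : ∀ t, n < t → D (s t) (s n) ≤ 2 * (1 / 2) ^ n * D (s 1) (s 0) → P (s t))
    (hstep : ∀ t, P (s t) → P (s (t + 1)) →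
      D (s (t + 2)) (s (t + 1)) ≤ 1 / 2 * D (s (t + 1)) (s t)) (t : ℕ) :
    P (s t) ∧ D (s (t + 1)) (s t) ≤ (1 / 2) ^ t * D (s 1) (s 0) ∧
      (n < t → D (s t) (s n) ≤ 2 * ((1 / 2) ^ n - (1 / 2) ^ t) * D (s 1) (s 0)) := by
  induction t with
  | zero => exact ⟨hlow 0 n.zero_le, by simp, by simp⟩
  | succ t ih =>
    obtain ⟨hPt, hdecay, hfar_t⟩ := ih
    have hfar_succ : n < t + 1 →
        D (s (t + 1)) (s n) ≤ 2 * ((1 / 2) ^ n - (1 / 2) ^ (t + 1)) * D (s 1) (s 0) := by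
      intro hnt
      rcases (Nat.lt_succ_iff.mp hnt).eq_or_lt with rfl | hnt
      · rwa [show 2 * ((1 / 2 : ℝ) ^ n - (1 / 2) ^ (n + 1)) = (1 / 2) ^ n by ring]
      · calc D (s (t + 1)) (s n) ≤ D (s (t + 1)) (s t) + D (s t) (s n) := hD _ _ _
          _ ≤ (1 / 2) ^ t * D (s 1) (s 0) + 2 * ((1 / 2) ^ n - (1 / 2) ^ t) * D (s 1) (s 0) :=
            add_le_add hdecay (hfar_t hnt)
          _ = 2 * ((1 / 2) ^ n - (1 / 2) ^ (t + 1)) * D (s 1) (s 0) := by ring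
    have hPsucc : P (s (t + 1)) := by
      rcases le_or_gt (t + 1) n with hle | hnt
      · exact hlow _ hle
      · refine hfar _ hnt ((hfar_succ hnt).trans ?_)
        have : 0 ≤ (1 / 2 : ℝ) ^ (t + 1) * D (s 1) (s 0) := by positivity
        linarith
    refine ⟨hPsucc, ?_, hfar_succ⟩
    calc D (s (t + 2)) (s (t + 1)) ≤ 1 / 2 * D (s (t + 1)) (s t) := hstep t hPt hPsucc
      _ ≤ 1 / 2 * ((1 / 2) ^ t * D (s 1) (s 0)) := by gcongr
      _ = (1 / 2) ^ (t + 1) * D (s 1) (s 0) := by ring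

theorem forall_mem_and_geometric_decay (hD : ∀ x y z, D x z ≤ D x y + D y z)
    (hδ : 0 ≤ D (s 1) (s 0)) (hlow : ∀ t ≤ n, P (s t))
    (hfar : ∀ t, n < t → D (s t) (s n) ≤ 2 * (1 / 2) ^ n * D (s 1) (s 0) → P (s t))
    (hstep : ∀ t, P (s t) → P (s (t + 1)) →
      D (s (t + 2)) (s (t + 1)) ≤ 1 / 2 * D (s (t + 1)) (s t)) :
    (∀ t, P (s t)) ∧ ∀ t, 2 ≤ t →
      D (s t) (s (t - 1)) ≤ 1 / 2 * D (s (t - 1)) (s (t - 2)) ∧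
      D (s t) (s (t - 1)) ≤ (1 / 2 : ℝ) ^ (t - 1) * D (s 1) (s 0) := by
  have inv := basin_invariant hD hδ hlow hfar hstep
  refine ⟨fun t => (inv t).1, fun t ht => ?_⟩
  obtain ⟨t, rfl⟩ := Nat.exists_eq_add_of_le' ht
  exact ⟨hstep t (inv t).1 (inv (t + 1)).1, (inv (t + 1)).2.1⟩

end GeometricDecay

lemma lop_eq_smul {n d m : ℕ} (A : Matrix (Fin d) (Fin m) ℝ)
    (W : Matrix (Fin n × Fin d) (Fin m) ℝ) (σ : ℝ) (X : Matrix (Fin n × Fin d) (Fin d) ℝ) :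
    Lop A W σ X = ((n : ℝ) * opNorm A ^ 2)⁻¹ •
      ((ZStack n d * A + σ • W) * (ZStack n d * A + σ • W)ᵀ * X) := by
  unfold Lop delta
  congr 2
  simp only [Matrix.transpose_add, Matrix.transpose_smul, Matrix.transpose_mul,
    Matrix.add_mul, Matrix.mul_add, Matrix.smul_mul, Matrix.mul_smul, smul_add,
    smul_smul, Matrix.mul_assoc]
  abel

section GPM

variable {n d m : ℕ} {D : Matrix (Fin n × Fin d) (Fin m) ℝ}
  {S : ℕ → Matrix (Fin n × Fin d) (Fin d) ℝ}

lemma IsGPM.orthBlocks (hS : IsGPM D S) : ∀ t, OrthBlocks (S t)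
  | 0 => fun i => (hS.1.choose_spec.2 i).1
  | t + 1 => fun i => (hS.2 t i).1

lemma IsGPM.isPolarBlocks_lop {A : Matrix (Fin d) (Fin m) ℝ}
    {W : Matrix (Fin n × Fin d) (Fin m) ℝ} {σ : ℝ} (hS : IsGPM (ZStack n d * A + σ • W) S)
    (hn : 0 < n) (hA : 0 < opNorm A) (t : ℕ) :
    IsPolarBlocks (Lop A W σ (S t)) (S (t + 1)) := by
  rw [lop_eq_smul]
  exact (hS.2 t).smul (by positivity)

end GPM

section Bounds

variable {n d m : ℕ} {γ : ℝ}

lemma bnd2_le_bnd1 (hn : 1 ≤ n) (hγ : 0 ≤ γ) : bnd2 n d m γ ≤ bnd1 n d m γ := by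
  have hlog : 0 ≤ Real.log n := Real.log_nonneg (by exact_mod_cast hn)
  have : √(2 * γ * Real.log n) ≤ √(2 * γ * n * Real.log n) := Real.sqrt_le_sqrt <| by
    calc 2 * γ * Real.log n = 2 * γ * Real.log n * 1 := (mul_one _).symm
      _ ≤ 2 * γ * Real.log n * n := by gcongr; exact_mod_cast hn
      _ = 2 * γ * n * Real.log n := by ring
  unfold bnd1 bnd2
  linarith

lemma opNorm_blk_mul_transpose_le (hn : 1 ≤ n) (hγ : 0 ≤ γ)
    {W : Matrix (Fin n × Fin d) (Fin m) ℝ} (hW : opNorm W ≤ bnd2 n d m γ) {i : Fin n}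
    (hWi : opNorm (blk W i) ≤ √d + √m + √(2 * γ * Real.log n)) :
    opNorm (blk W i * Wᵀ) ≤ bnd1 n d m γ ^ 2 := by
  have hWi' : opNorm (blk W i) ≤ bnd2 n d m γ := by
    refine hWi.trans ?_
    unfold bnd2
    gcongr
    exact le_mul_of_one_le_left (Nat.cast_nonneg d) (by exact_mod_cast hn)
  calc opNorm (blk W i * Wᵀ) ≤ opNorm (blk W i) * opNorm W := by
        simpa [opNorm_transpose] using opNorm_mul_le (blk W i) Wᵀ
    _ ≤ bnd2 n d m γ * bnd2 n d m γ :=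
        mul_le_mul hWi' hW (opNorm_nonneg _) ((opNorm_nonneg _).trans hWi')
    _ ≤ bnd1 n d m γ ^ 2 := by
        rw [← sq]
        exact pow_le_pow_left₀ ((opNorm_nonneg _).trans hW) (bnd2_le_bnd1 hn hγ) 2

lemma half_pow_mul_sqrt_le_one (n : ℕ) : (1 / 2 : ℝ) ^ n * √n ≤ 1 := by
  have h : √n ≤ 2 ^ n := Real.sqrt_le_iff.2 ⟨by positivity, by
    calc (n : ℝ) ≤ 2 ^ n := by exact_mod_cast n.lt_two_pow_self.le
      _ ≤ (2 ^ n) ^ 2 := le_self_pow₀ (one_le_pow₀ (by norm_num)) (by norm_num)⟩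
  calc (1 / 2 : ℝ) ^ n * √n ≤ (1 / 2) ^ n * 2 ^ n := by gcongr
    _ = 1 := by rw [← mul_pow]; norm_num

lemma eps_mul_sqrt_le {κ : ℝ} (hκ : 1 ≤ κ) (hd : 1 ≤ d) :
    1 / (32 * κ ^ 2 * √d) * √(n * d) ≤ √n / 32 := by
  have hd' : 0 < √(d : ℝ) := Real.sqrt_pos.2 (by exact_mod_cast hd)
  rw [Real.sqrt_mul (Nat.cast_nonneg n)]
  field_simp
  nlinarith [Real.sqrt_nonneg (n : ℝ), one_le_pow₀ (n := 2) hκ]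

end Bounds

section Basins

variable {n d m : ℕ} {X Y : Matrix (Fin n × Fin d) (Fin d) ℝ}

lemma memNeps_of_dF_le (hn : 1 ≤ n) {ε : ℝ} (hX : OrthBlocks X)
    (hY : dF Y (ZStack n d) ≤ ε * √(n * d) / 2)
    (hXY : dF X Y ≤ 2 * (1 / 2) ^ n * (ε * √(n * d))) : memNeps ε X := by
  refine ⟨hX, ?_⟩
  have hε : 0 ≤ ε * √(n * d) := by linarith [dF_nonneg (X := Y) (Y := ZStack n d)]
  rcases hn.eq_or_lt with rfl | hn2
  -- for `n = 1` the bound `hXY` leaves no room, but then `d_F` vanishes on `O(d)^{⊗1}`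
  · rw [dF_eq_zero_of_orthBlocks hX orthBlocks_zStack]
    exact hε
  · have : (1 / 2 : ℝ) ^ n ≤ (1 / 2) ^ 2 :=
      pow_le_pow_of_le_one (by norm_num) (by norm_num) hn2
    have : 2 * (1 / 2 : ℝ) ^ n * (ε * √(n * d)) ≤ ε * √(n * d) / 2 := by nlinarith
    linarith [dF_triangle X Y (ZStack n d)]

lemma memNxi_of_dF_le {W : Matrix (Fin n × Fin d) (Fin m) ℝ} {γ ξ : ℝ} (hX : OrthBlocks X)
    (hWW : ∀ i, opNorm (blk W i * Wᵀ) ≤ bnd1 n d m γ ^ 2)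
    (hY : ∀ i, frob (blk W i * Wᵀ * Y) ≤ ξ / 2 * √d * bnd1 n d m γ ^ 2)
    (hXY : dF X Y ≤ ξ / 2 * √d) : memNxi W γ ξ X := by
  refine ⟨hX, fun i => ?_⟩
  calc frob (blk W i * Wᵀ * X) ≤ frob (blk W i * Wᵀ * Y) + opNorm (blk W i * Wᵀ) * dF X Y :=
        frob_mul_le_add_opNorm_mul_dF _ X Y
    _ ≤ ξ / 2 * √d * bnd1 n d m γ ^ 2 + bnd1 n d m γ ^ 2 * (ξ / 2 * √d) := by
        gcongr
        exacts [hY i, dF_nonneg, hWW i]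
    _ = ξ * √d * bnd1 n d m γ ^ 2 := by ring

end Basins

theorem gpm_global_contraction_general (n d m : ℕ) (hn : 1 ≤ n) (hd : 1 ≤ d)
    (A : Matrix (Fin d) (Fin m) ℝ) (hA : 0 < sigmaMin A)
    (W : Matrix (Fin n × Fin d) (Fin m) ℝ) (σ γ : ℝ) (hγ : 2 ≤ γ)
    (ε ξ : ℝ) (hε : ε = 1 / (32 * kappa A ^ 2 * Real.sqrt (d : ℝ))) (hξ : ξ = 6)
    (S : ℕ → Matrix (Fin n × Fin d) (Fin d) ℝ)
    (hS : IsGPM (ZStack n d * A + σ • W) S)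
    (h1 : ∀ t ≤ n, ∀ i, frob (blk W i * Wᵀ * S t) ≤
      ξ / 2 * Real.sqrt (d : ℝ) * bnd1 n d m γ ^ 2)
    (h3 : ∀ t ≤ n, dF (S t) (ZStack n d) ≤ ε * Real.sqrt ((n : ℝ) * d) / 2)
    (hcontr : ∀ X Y : Matrix (Fin n × Fin d) (Fin d) ℝ,
      memNeps ε X → memNxi W γ ξ X → memNeps ε Y → memNxi W γ ξ Y →
      ∀ TX TY, IsPolarBlocks (Lop A W σ X) TX → IsPolarBlocks (Lop A W σ Y) TY →
        dF TX TY ≤ 1 / 2 * dF X Y)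
    (hW : opNorm W ≤ bnd2 n d m γ)
    (hWi : ∀ i, opNorm (blk W i) ≤
      Real.sqrt (d : ℝ) + Real.sqrt (m : ℝ) + Real.sqrt (2 * γ * Real.log n)) :
    (∀ t, memNeps ε (S t) ∧ memNxi W γ ξ (S t)) ∧
    ∀ t, 2 ≤ t →
      dF (S t) (S (t - 1)) ≤ 1 / 2 * dF (S (t - 1)) (S (t - 2)) ∧
      dF (S t) (S (t - 1)) ≤ (1 / 2 : ℝ) ^ (t - 1) * dF (S 1) (S 0) := by
  subst hξ
  have : NeZero d := ⟨by omega⟩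
  have horth := hS.orthBlocks
  have hpolar := hS.isPolarBlocks_lop hn (hA.trans_le (sigmaMin_le_opNorm A))
  have hWW i := opNorm_blk_mul_transpose_le hn (by linarith) hW (hWi i)
  have hδ : dF (S 1) (S 0) ≤ ε * √(n * d) := by
    linarith [dF_triangle (S 1) (ZStack n d) (S 0), dF_comm (ZStack n d) (S 0), h3 1 hn,
      h3 0 n.zero_le]
  have hεn : ε * √(n * d) ≤ √n / 32 := hε ▸ eps_mul_sqrt_le (one_le_kappa hA) hd
  refine forall_mem_and_geometric_decay (n := n) (P := fun X => memNeps ε X ∧ memNxi W γ 6 X)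
    dF_triangle dF_nonneg (fun t ht => ?_) (fun t _ hfar => ?_) fun t hSt hSt1 =>
      hcontr _ _ hSt1.1 hSt1.2 hSt.1 hSt.2 _ _ (hpolar (t + 1)) (hpolar t)
  · refine ⟨⟨horth t, by linarith [h3 t ht, dF_nonneg (X := S t) (Y := ZStack n d)]⟩,
      horth t, fun i => ?_⟩
    have : 0 ≤ √d * bnd1 n d m γ ^ 2 := by positivity
    linarith [h1 t ht i]
  refine ⟨memNeps_of_dF_le hn (horth t) (h3 n le_rfl) (hfar.trans (by gcongr)),
    memNxi_of_dF_le (horth t) hWW (h1 n le_rfl) (hfar.trans ?_)⟩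
  calc 2 * (1 / 2) ^ n * dF (S 1) (S 0) ≤ 2 * (1 / 2) ^ n * (√n / 32) := by
        gcongr; exact hδ.trans hεn
    _ = (1 / 2) ^ n * √n / 16 := by ring
    _ ≤ 1 / 16 := by gcongr; exact half_pow_mul_sqrt_le_one n
    _ ≤ 6 / 2 * √d := by
        linarith [Real.one_le_sqrt.2 (show (1 : ℝ) ≤ d by exact_mod_cast hd)]

/-- Lemma 5.8: conditioned on the basin events for 0 ≤ t ≤ n, the contraction
property on N_ε ∩ N_{ξ,∞}, and the Gaussian norm events, all GPM iterates stay in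
N_ε ∩ N_{ξ,∞} and d_F(Sᵗ,S^{t−1}) ≤ (1/2)d_F(S^{t−1},S^{t−2}) ≤ 2^{−t+1}d_F(S¹,S⁰). -/
theorem gpm_global_contraction (n d m : ℕ) (hn : 1 ≤ n) (hd : 1 ≤ d) (hm : d ≤ m)
    (A : Matrix (Fin d) (Fin m) ℝ) (hA : 0 < sigmaMin A)
    (W : Matrix (Fin n × Fin d) (Fin m) ℝ) (σ γ : ℝ) (hσ : 0 < σ) (hγ : 2 ≤ γ)
    (ε ξ : ℝ) (hε : ε = 1 / (32 * kappa A ^ 2 * Real.sqrt (d : ℝ))) (hξ : ξ = 6)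
    (S : ℕ → Matrix (Fin n × Fin d) (Fin d) ℝ)
    (hS : IsGPM (ZStack n d * A + σ • W) S)
    (Sl : Fin n → ℕ → Matrix (Fin n × Fin d) (Fin d) ℝ)
    (hSl : ∀ i, IsGPM (ZStack n d * A + σ • mask W i) (Sl i))
    (h1 : ∀ t ≤ n, ∀ i, frob (blk W i * Wᵀ * S t) ≤
      ξ / 2 * Real.sqrt (d : ℝ) * bnd1 n d m γ ^ 2)
    (h2 : ∀ t ≤ n, ∀ i, dF (S t) (Sl i t) ≤ ε * Real.sqrt (d : ℝ))
    (h3 : ∀ t ≤ n, dF (S t) (ZStack n d) ≤ ε * Real.sqrt ((n : ℝ) * d) / 2)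
    (hcontr : ∀ X Y : Matrix (Fin n × Fin d) (Fin d) ℝ,
      memNeps ε X → memNxi W γ ξ X → memNeps ε Y → memNxi W γ ξ Y →
      ∀ TX TY, IsPolarBlocks (Lop A W σ X) TX → IsPolarBlocks (Lop A W σ Y) TY →
        dF TX TY ≤ 1 / 2 * dF X Y)
    (hW : opNorm W ≤ bnd2 n d m γ)
    (hWi : ∀ i, opNorm (blk W i) ≤
      Real.sqrt (d : ℝ) + Real.sqrt (m : ℝ) + Real.sqrt (2 * γ * Real.log n)) :
    (∀ t, memNeps ε (S t) ∧ memNxi W γ ξ (S t)) ∧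
    ∀ t, 2 ≤ t →
      dF (S t) (S (t - 1)) ≤ 1 / 2 * dF (S (t - 1)) (S (t - 2)) ∧
      dF (S t) (S (t - 1)) ≤ (1 / 2 : ℝ) ^ (t - 1) * dF (S 1) (S 0) :=
  gpm_global_contraction_general n d m hn hd A hA W σ γ hγ ε ξ hε hξ S hS h1 h3 hcontr hW hWi

end GOPP
end

section
/- Let C ∈ ℝ^{nd×nd} be symmetric and let S ∈ O(d)^{⊗n}. If there exists a block-diagonal matrix Λ ∈ ℝ^{nd×nd} (with n diagonal blocks of size d×d) such that CS = ΛS and Λ − C ⪰ 0, then G = SS^T is a global maximizer of the SDP: maximize ⟨C,G⟩ over symmetric G ∈ ℝ^{nd×nd} with G ⪰ 0 and each i-th diagonal d×d block G_ii = I_d. Moreover, if in addition rank(Λ − C) = (n−1)d, then SS^T is the unique global maximizer. -/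
open MeasureTheory Matrix Filter

/-!
Put `M = Λ - C ⪰ 0`. Since `Λ` is block diagonal and a feasible `G` has identity diagonal blocks,
`⟨Λ, G⟩ = tr Λ`, so `⟨C, G⟩ = tr Λ - ⟨M, G⟩ ≤ tr Λ`, with equality at `G = SSᵀ` because `MS = 0`.
An optimal `G` has `⟨M, G⟩ = 0`, hence `MG = 0`: the columns of `G` lie in `ker M`, which under
the rank condition is the `d`-dimensional range of `S`. Then `G = SYSᵀ`, and the identity
diagonal blocks force `Y = I`.
-/
namespace Matrix

section PosSemidef

open scoped ComplexOrder MatrixOrder Matrix.Norms.L2Operator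

variable {𝕜 ι : Type*} [RCLike 𝕜] [Fintype ι] [DecidableEq ι] {A B : Matrix ι ι 𝕜}

lemma PosSemidef.trace_mul_nonneg (hA : A.PosSemidef) (hB : B.PosSemidef) :
    0 ≤ (A * B).trace := by
  obtain ⟨X, rfl⟩ := CStarAlgebra.nonneg_iff_eq_star_mul_self.mp hB.nonneg
  rw [star_eq_conjTranspose, ← Matrix.mul_assoc, trace_mul_comm, ← Matrix.mul_assoc]
  exact (hA.mul_mul_conjTranspose_same X).trace_nonneg

lemma PosSemidef.mul_eq_zero_of_trace_mul_eq_zero (hA : A.PosSemidef) (hB : B.PosSemidef)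
    (h : (A * B).trace = 0) : A * B = 0 := by
  obtain ⟨Y, rfl⟩ := CStarAlgebra.nonneg_iff_eq_star_mul_self.mp hA.nonneg
  obtain ⟨X, rfl⟩ := CStarAlgebra.nonneg_iff_eq_star_mul_self.mp hB.nonneg
  simp only [star_eq_conjTranspose] at h ⊢
  have hYX : Y * Xᴴ = 0 := by
    rw [← trace_conjTranspose_mul_self_eq_zero_iff, ← h, conjTranspose_mul,
      conjTranspose_conjTranspose, Matrix.mul_assoc, trace_mul_comm]
    simp only [Matrix.mul_assoc]
  rw [Matrix.mul_assoc, ← Matrix.mul_assoc Y, hYX, Matrix.zero_mul, Matrix.mul_zero]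

end PosSemidef

lemma exists_eq_mul_of_range_mulVecLin_le {R ι κ μ : Type*} [CommSemiring R] [Fintype κ]
    [Fintype μ] [DecidableEq μ] {A : Matrix ι μ R} {B : Matrix ι κ R}
    (h : LinearMap.range A.mulVecLin ≤ LinearMap.range B.mulVecLin) :
    ∃ C : Matrix κ μ R, A = B * C := by
  have hcol : ∀ j, ∃ w, B *ᵥ w = A.col j := fun j => mulVec_single_one A j ▸ h ⟨_, rfl⟩
  choose w hw using hcol
  refine ⟨(of w)ᵀ, ?_⟩
  ext i j
  rw [← col_apply A, ← hw j]
  rfl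

variable {K ι κ : Type*} [Field K] [Fintype ι] [Fintype κ]

lemma ker_mulVecLin_eq_range_of_mul_eq_zero {M : Matrix ι ι K} {S : Matrix ι κ K}
    (hMS : M * S = 0) (hrank : M.rank + S.rank = Fintype.card ι) :
    LinearMap.ker M.mulVecLin = LinearMap.range S.mulVecLin := by
  have hle : LinearMap.range S.mulVecLin ≤ LinearMap.ker M.mulVecLin := by
    rw [LinearMap.range_le_ker_iff, ← mulVecLin_mul, hMS, mulVecLin_zero]
  refine (Submodule.eq_of_le_of_finrank_le hle ?_).symm
  have := LinearMap.finrank_range_add_finrank_ker M.mulVecLin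
  rw [Module.finrank_fintype_fun_eq_card] at this
  rw [rank, rank] at hrank
  omega

lemma exists_eq_mul_mul_transpose_of_range_mulVecLin_le [DecidableEq ι] [DecidableEq κ]
    {G : Matrix ι ι K} {S : Matrix ι κ K} {c : K} (hc : c ≠ 0) (hS : Sᵀ * S = c • 1)
    (hG : G.IsSymm) (h : LinearMap.range G.mulVecLin ≤ LinearMap.range S.mulVecLin) :
    ∃ Y : Matrix κ κ K, G = S * Y * Sᵀ := by
  obtain ⟨C, rfl⟩ := exists_eq_mul_of_range_mulVecLin_le h
  have hleft : S * Sᵀ * (S * C) = c • (S * C) := by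
    rw [Matrix.mul_assoc, ← Matrix.mul_assoc Sᵀ, hS, Matrix.smul_mul, Matrix.one_mul,
      Matrix.mul_smul]
  have hright : S * C * (S * Sᵀ) = c • (S * C) := by
    simpa [Matrix.transpose_mul, hG.eq, Matrix.mul_assoc] using congrArg transpose hleft
  refine ⟨(c ^ 2)⁻¹ • (Sᵀ * (S * C) * S), ?_⟩
  calc S * C = (c ^ 2)⁻¹ • (S * Sᵀ * (S * C) * (S * Sᵀ)) := by
        rw [hleft, Matrix.smul_mul, hright, smul_smul, smul_smul, mul_assoc, ← sq,
          inv_mul_cancel₀ (pow_ne_zero 2 hc), one_smul]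
    _ = S * ((c ^ 2)⁻¹ • (Sᵀ * (S * C) * S)) * Sᵀ := by
        simp only [Matrix.mul_smul, Matrix.smul_mul, Matrix.mul_assoc]

end Matrix

namespace GOPP

open Matrix

section Blocks

variable {n d : ℕ}

lemma blk_mul {k l : ℕ} (X : Matrix (Fin n × Fin d) (Fin k) ℝ) (Y : Matrix (Fin k) (Fin l) ℝ)
    (i : Fin n) : blk (X * Y) i = blk X i * Y :=
  rfl

lemma dblk_mul_transpose {k : ℕ} (X Y : Matrix (Fin n × Fin d) (Fin k) ℝ) (i : Fin n) :
    dblk (X * Yᵀ) i = blk X i * (blk Y i)ᵀ :=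
  rfl

lemma transpose_mul_eq_sum_blk {k l : ℕ} (X : Matrix (Fin n × Fin d) (Fin k) ℝ)
    (Y : Matrix (Fin n × Fin d) (Fin l) ℝ) : Xᵀ * Y = ∑ i, (blk X i)ᵀ * blk Y i := by
  ext a b
  simp [mul_apply, Fintype.sum_prod_type, Matrix.sum_apply, blk]

lemma trace_mul_eq_trace_of_dblk_eq_one {Λ G : Matrix (Fin n × Fin d) (Fin n × Fin d) ℝ}
    (hΛ : ∀ (i j : Fin n) (a b : Fin d), i ≠ j → Λ (i, a) (j, b) = 0)
    (hG : ∀ i, dblk G i = 1) : (Λ * G).trace = Λ.trace := by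
  simp only [trace, diag, mul_apply, Fintype.sum_prod_type]
  refine Finset.sum_congr rfl fun i _ => Finset.sum_congr rfl fun a _ => ?_
  rw [Finset.sum_eq_single i (fun j _ hj => Finset.sum_eq_zero fun b _ => by
    rw [hΛ i j a b hj.symm, zero_mul]) (by simp)]
  have hGi : ∀ b, G (i, b) (i, a) = (1 : Matrix (Fin d) (Fin d) ℝ) b a := fun b => by
    rw [← hG i]; rfl
  simp [hGi, one_apply]

end Blocks

lemma IsOrth.eq_one_of_mul_mul_transpose_eq_one {d : ℕ} {Q Y : Matrix (Fin d) (Fin d) ℝ}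
    (hQ : IsOrth Q) (h : Q * Y * Qᵀ = 1) : Y = 1 := by
  calc Y = Qᵀ * Q * Y * (Qᵀ * Q) := by rw [hQ.1, Matrix.one_mul, Matrix.mul_one]
    _ = Qᵀ * (Q * Y * Qᵀ) * Q := by simp only [Matrix.mul_assoc]
    _ = 1 := by rw [h, Matrix.mul_one, hQ.1]

namespace OrthBlocks

variable {n d : ℕ} {S : Matrix (Fin n × Fin d) (Fin d) ℝ}

lemma transpose_mul_self (hS : OrthBlocks S) : Sᵀ * S = (n : ℝ) • 1 := by
  simp only [transpose_mul_eq_sum_blk, (hS _).1, Finset.sum_const, Finset.card_univ,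
    Fintype.card_fin, ← Nat.cast_smul_eq_nsmul ℝ]

lemma dblk_mul_transpose_self (hS : OrthBlocks S) (i : Fin n) : dblk (S * Sᵀ) i = 1 :=
  (hS i).2

lemma rank_eq (hn : 1 ≤ n) (hS : OrthBlocks S) : S.rank = d := by
  have hn0 : (n : ℝ) ≠ 0 := by positivity
  rw [← rank_transpose_mul_self, hS.transpose_mul_self,
    rank_smul_of_mem_nonZeroDivisors _ (mem_nonZeroDivisors_of_ne_zero hn0), rank_one,
    Fintype.card_fin]

theorem eq_mul_transpose_of_mul_eq_zero (hn : 1 ≤ n) (hS : OrthBlocks S)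
    {M G : Matrix (Fin n × Fin d) (Fin n × Fin d) ℝ} (hMS : M * S = 0)
    (hM : M.rank = (n - 1) * d) (hG : G.IsSymm) (hblk : ∀ i, dblk G i = 1)
    (hMG : M * G = 0) : G = S * Sᵀ := by
  have hrank : M.rank + S.rank = Fintype.card (Fin n × Fin d) := by
    rw [hM, hS.rank_eq hn, Fintype.card_prod, Fintype.card_fin, Fintype.card_fin,
      ← Nat.succ_mul, Nat.succ_eq_add_one, Nat.sub_add_cancel hn]
  have hrange : LinearMap.range G.mulVecLin ≤ LinearMap.range S.mulVecLin := by
    rw [← ker_mulVecLin_eq_range_of_mul_eq_zero hMS hrank, LinearMap.range_le_ker_iff,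
      ← mulVecLin_mul, hMG, mulVecLin_zero]
  obtain ⟨Y, rfl⟩ := exists_eq_mul_mul_transpose_of_range_mulVecLin_le
    (by positivity : (n : ℝ) ≠ 0) hS.transpose_mul_self hG hrange
  have hY := hblk ⟨0, hn⟩
  rw [dblk_mul_transpose, blk_mul] at hY
  rw [(hS _).eq_one_of_mul_mul_transpose_eq_one hY, Matrix.mul_one]

end OrthBlocks

theorem sdp_optimality_general (n d : ℕ) (hn : 1 ≤ n)
    (Cm : Matrix (Fin n × Fin d) (Fin n × Fin d) ℝ)
    (S : Matrix (Fin n × Fin d) (Fin d) ℝ) (hS : OrthBlocks S)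
    (Lam : Matrix (Fin n × Fin d) (Fin n × Fin d) ℝ)
    (hLamDiag : ∀ (i j : Fin n) (a b : Fin d), i ≠ j → Lam (i, a) (j, b) = 0)
    (hEq : Cm * S = Lam * S) (hPSD : (Lam - Cm).PosSemidef) :
    (∀ G : Matrix (Fin n × Fin d) (Fin n × Fin d) ℝ,
      G.PosSemidef → (∀ i, dblk G i = 1) →
      Matrix.trace (Cmᵀ * G) ≤ Matrix.trace (Cmᵀ * (S * Sᵀ))) ∧
    ((Lam - Cm).rank = (n - 1) * d →
      ∀ G : Matrix (Fin n × Fin d) (Fin n × Fin d) ℝ,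
        G.PosSemidef → (∀ i, dblk G i = 1) →
        Matrix.trace (Cmᵀ * G) = Matrix.trace (Cmᵀ * (S * Sᵀ)) →
        G = S * Sᵀ) := by
  have hMS : (Lam - Cm) * S = 0 := by rw [Matrix.sub_mul, hEq, sub_self]
  have hobjective : ∀ G, (∀ i, dblk G i = 1) →
      (Cmᵀ * G).trace = Lam.trace - ((Lam - Cm) * G).trace := fun G hG => by
    have hCm : Cmᵀ = Lamᵀ - (Lam - Cm) := by
      rw [← (isHermitian_iff_isSymm.mp hPSD.1).eq, transpose_sub, sub_sub_cancel]
    rw [hCm, Matrix.sub_mul, trace_sub, ← trace_transpose Lam,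
      trace_mul_eq_trace_of_dblk_eq_one (fun i j a b h => hLamDiag j i b a h.symm) hG]
  have hoptimum : (Cmᵀ * (S * Sᵀ)).trace = Lam.trace := by
    rw [hobjective _ hS.dblk_mul_transpose_self, ← Matrix.mul_assoc, hMS, Matrix.zero_mul,
      trace_zero, sub_zero]
  refine ⟨fun G hG hblk => ?_, fun hrank G hG hblk hopt => ?_⟩
  · rw [hobjective G hblk, hoptimum]
    linarith [hPSD.trace_mul_nonneg hG]
  · rw [hobjective G hblk, hoptimum, sub_eq_self] at hopt
    exact hS.eq_mul_transpose_of_mul_eq_zero hn hMS hrank (isHermitian_iff_isSymm.mp hG.1) hblk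
      (hPSD.mul_eq_zero_of_trace_mul_eq_zero hG hopt)

/-- Theorem 5.9: sufficient optimality condition for the SDP relaxation. If
CS = ΛS with Λ block-diagonal and Λ − C ⪰ 0, then SSᵀ is a global maximizer of the SDP;
if moreover rank(Λ − C) = (n−1)d, it is the unique one. -/
theorem sdp_optimality (n d : ℕ) (hn : 1 ≤ n) (hd : 1 ≤ d)
    (Cm : Matrix (Fin n × Fin d) (Fin n × Fin d) ℝ) (hC : Cmᵀ = Cm)
    (S : Matrix (Fin n × Fin d) (Fin d) ℝ) (hS : OrthBlocks S)
    (Lam : Matrix (Fin n × Fin d) (Fin n × Fin d) ℝ)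
    (hLamDiag : ∀ (i j : Fin n) (a b : Fin d), i ≠ j → Lam (i, a) (j, b) = 0)
    (hEq : Cm * S = Lam * S) (hPSD : (Lam - Cm).PosSemidef) :
    (∀ G : Matrix (Fin n × Fin d) (Fin n × Fin d) ℝ,
      G.PosSemidef → (∀ i, dblk G i = 1) →
      Matrix.trace (Cmᵀ * G) ≤ Matrix.trace (Cmᵀ * (S * Sᵀ))) ∧
    ((Lam - Cm).rank = (n - 1) * d →
      ∀ G : Matrix (Fin n × Fin d) (Fin n × Fin d) ℝ,
        G.PosSemidef → (∀ i, dblk G i = 1) →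
        Matrix.trace (Cmᵀ * G) = Matrix.trace (Cmᵀ * (S * Sᵀ)) →
        G = S * Sᵀ) :=
  sdp_optimality_general n d hn Cm S hS Lam hLamDiag hEq hPSD

end GOPP
end
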